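/- Let α = log_4(8/3), let β : ℕ → ℝ be given by β_d = (1/2)·log_4(3/2) for d ≥ 3 and β_d = 0 for d ≤ 2, and let c = 4. For every integer D ≥ 4 and every finite list d = (d_1, …, d_f) of integers with 0 ≤ f ≤ D and d_i ≥ 3 for all i, it holds that c^{−Δ1(D,d)} + c^{−Δ2(D,d)} ≤ 1. -/

import Mathlib

/-- The simple-analysis parameter function `β`:
`β_d = (1/2)·log_4(3/2)` for `d ≥ 3` and `β_d = 0` for `d ≤ 2`. -/
noncomputable def simpleBeta : ℕ → ℝ := fun d =>
  if 3 ≤ d then (1 / 2) * Real.logb 4 (3 / 2) else 0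

/-- `Δ1(D, d) = 1 − f·α/D + Σ_{i=1}^f (β_{d_i} − β_{d_i−1})` where `f` is the
length of the list `d`. -/
noncomputable def Delta1 (α : ℝ) (β : ℕ → ℝ) (D : ℕ) (d : List ℕ) : ℝ :=
  1 - (d.length : ℝ) * α / D + (d.map (fun x => β x - β (x - 1))).sum

/-- `Δ2(D, d) = α − 2α/D + Σ_{i=1}^f β_{d_i} − β_{d'}` where
`d' = D + Σ_{i=1}^f (d_i − 2)`. -/
noncomputable def Delta2 (α : ℝ) (β : ℕ → ℝ) (D : ℕ) (d : List ℕ) : ℝ :=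
  α - 2 * α / D + (d.map β).sum - β (D + (d.map (fun x => x - 2)).sum)

/-!
Each β-increment β_{d_i} − β_{d_i − 1} is nonnegative, and β_{d'} = β_{d_i} since d' ≥ D ≥ 3, so with
f the length of d both terms are bounded by exponentials in f:
`4^{-Δ1} ≤ (1/4)·(8/3)^{f/D}` and `4^{-Δ2} ≤ (3/4)·(2/3)^{f/2}`, the latter using `2/D ≤ 1/2`.
The sum of these bounds is a convex function of f, so on `[0, D]` it is maximal at an endpoint:
it equals 1 at f = 0 and is at most `2/3 + (3/4)·(4/9) = 1` at f = D ≥ 4.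
-/

open Real Set

lemma simpleBeta_le (n : ℕ) : simpleBeta n ≤ logb 4 (3 / 2) / 2 := by
  unfold simpleBeta
  split_ifs
  · linarith
  · have : 0 ≤ logb 4 (3 / 2) := logb_nonneg (by norm_num) (by norm_num)
    linarith

lemma simpleBeta_of_three_le {n : ℕ} (hn : 3 ≤ n) : simpleBeta n = logb 4 (3 / 2) / 2 := by
  rw [simpleBeta, if_pos hn]
  ring

lemma neg_Delta1_simpleBeta_le (α : ℝ) (D : ℕ) {d : List ℕ} (hd : ∀ x ∈ d, 3 ≤ x) :
    -Delta1 α simpleBeta D d ≤ -1 + d.length / D * α := by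
  have hinc : 0 ≤ (d.map fun x => simpleBeta x - simpleBeta (x - 1)).sum := by
    refine List.sum_nonneg fun y hy => ?_
    obtain ⟨x, hx, rfl⟩ := List.mem_map.mp hy
    rw [simpleBeta_of_three_le (hd x hx)]
    linarith [simpleBeta_le (x - 1)]
  rw [Delta1, div_mul_eq_mul_div]
  linarith

lemma Delta2_simpleBeta_eq (α : ℝ) {D : ℕ} (hD : 3 ≤ D) {d : List ℕ} (hd : ∀ x ∈ d, 3 ≤ x) :
    Delta2 α simpleBeta D d = α - 2 * α / D + (d.length - 1) * (logb 4 (3 / 2) / 2) := by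
  have hsum : (d.map simpleBeta).sum = d.length * (logb 4 (3 / 2) / 2) := by
    rw [List.map_congr_left fun x hx => simpleBeta_of_three_le (hd x hx), List.map_const',
      List.sum_replicate, nsmul_eq_mul]
  rw [Delta2, hsum, simpleBeta_of_three_le (by omega)]
  ring

lemma rpow_logb_add_mul_logb {b A B : ℝ} (hb : 0 < b) (hb1 : b ≠ 1) (hA : 0 < A) (hB : 0 < B)
    (t : ℝ) : b ^ (logb b A + t * logb b B) = A * B ^ t := by
  rw [rpow_add hb, rpow_logb hb hb1 hA, mul_comm t, rpow_mul hb.le, rpow_logb hb hb1 hB]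

lemma four_rpow_neg_Delta1_le (D : ℕ) {d : List ℕ} (hd : ∀ x ∈ d, 3 ≤ x) :
    (4 : ℝ) ^ (-Delta1 (logb 4 (8 / 3)) simpleBeta D d) ≤ 1 / 4 * (8 / 3) ^ (d.length / D : ℝ) := by
  have hquarter : logb 4 (1 / 4 : ℝ) = -1 := by
    rw [one_div, logb_inv, logb_self_eq_one (by norm_num)]
  rw [← rpow_logb_add_mul_logb (b := 4) (by norm_num) (by norm_num) (by norm_num) (by norm_num),
    hquarter]
  exact rpow_le_rpow_of_exponent_le (by norm_num) (neg_Delta1_simpleBeta_le _ D hd)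

lemma four_rpow_neg_Delta2_le {D : ℕ} (hD : 4 ≤ D) {d : List ℕ} (hd : ∀ x ∈ d, 3 ≤ x) :
    (4 : ℝ) ^ (-Delta2 (logb 4 (8 / 3)) simpleBeta D d) ≤ 3 / 4 * (2 / 3) ^ (d.length / 2 : ℝ) := by
  set α := logb 4 (8 / 3 : ℝ)
  set L := logb 4 (3 / 2 : ℝ)
  have hα : 0 ≤ α := logb_nonneg (by norm_num) (by norm_num)
  have hthreeQuarters : logb 4 (3 / 4 : ℝ) = (L - α) / 2 := by
    have := logb_pow 4 (3 / 4 : ℝ) 2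
    rw [show (3 / 4 : ℝ) ^ 2 = 3 / 2 / (8 / 3) by norm_num, logb_div (by norm_num) (by norm_num)]
      at this
    push_cast at this
    linarith
  have htwoThirds : logb 4 (2 / 3 : ℝ) = -L := by
    rw [← logb_inv, inv_div]
  have hDinv : 2 * α / D ≤ α / 2 := by
    rw [div_le_div_iff₀ (by positivity) (by norm_num)]
    have : (4 : ℝ) ≤ D := by exact_mod_cast hD
    nlinarith
  rw [← rpow_logb_add_mul_logb (b := 4) (by norm_num) (by norm_num) (by norm_num) (by norm_num),
    hthreeQuarters, htwoThirds]
  refine rpow_le_rpow_of_exponent_le (by norm_num) ?_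
  rw [Delta2_simpleBeta_eq _ (by omega) hd]
  linarith

lemma convexOn_rpow_div {b : ℝ} (hb : 0 < b) (c : ℝ) : ConvexOn ℝ univ fun x : ℝ => b ^ (x / c) := by
  convert convexOn_rpow_left (rpow_pos_of_pos hb c⁻¹) using 2 with x
  rw [← rpow_mul hb.le, div_eq_inv_mul]

lemma quarter_mul_rpow_add_le_one {D F : ℝ} (hD : 4 ≤ D) (hF : F ∈ Icc 0 D) :
    1 / 4 * (8 / 3 : ℝ) ^ (F / D) + 3 / 4 * (2 / 3 : ℝ) ^ (F / 2) ≤ 1 := by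
  have hconvex : ConvexOn ℝ univ fun x : ℝ => 1 / 4 * (8 / 3 : ℝ) ^ (x / D) +
      3 / 4 * (2 / 3 : ℝ) ^ (x / 2) :=
    ((convexOn_rpow_div (by norm_num) D).smul (by norm_num)).add
      ((convexOn_rpow_div (by norm_num) 2).smul (by norm_num))
  refine (hconvex.le_max_of_mem_Icc (mem_univ _) (mem_univ _) hF).trans (max_le ?_ ?_)
  · norm_num
  · have hDD : D / D = 1 := div_self (by linarith)
    have htail : (2 / 3 : ℝ) ^ (D / 2) ≤ (2 / 3 : ℝ) ^ (2 : ℝ) :=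
      rpow_le_rpow_of_exponent_ge (by norm_num) (by norm_num) (by linarith)
    rw [hDD, rpow_one]
    norm_num at htail ⊢
    linarith

/-- With `α = log_4(8/3)`, the simple-analysis `β`, and `c = 4`,
for every `D ≥ 4` and every list `d = (d_1, …, d_f)` with `f ≤ D` and `d_i ≥ 3`,
`c^{−Δ1(D,d)} + c^{−Δ2(D,d)} ≤ 1`. -/
theorem stmt14 (D : ℕ) (hD : 4 ≤ D) (d : List ℕ)
    (hf : d.length ≤ D) (hd : ∀ x ∈ d, 3 ≤ x) :
    (4 : ℝ) ^ (-(Delta1 (Real.logb 4 (8 / 3)) simpleBeta D d))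
      + (4 : ℝ) ^ (-(Delta2 (Real.logb 4 (8 / 3)) simpleBeta D d)) ≤ 1 := by
  have hlength : (d.length : ℝ) ∈ Icc 0 (D : ℝ) := ⟨by positivity, by exact_mod_cast hf⟩
  calc _ ≤ 1 / 4 * (8 / 3) ^ (d.length / D : ℝ) + 3 / 4 * (2 / 3) ^ (d.length / 2 : ℝ) :=
        add_le_add (four_rpow_neg_Delta1_le D hd) (four_rpow_neg_Delta2_le hD hd)
    _ ≤ 1 := quarter_mul_rpow_add_le_one (by exact_mod_cast hD) hlength
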